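/- Let σ be a permutation of [n] with d descents, and define the weight disparity Δ(σ) = d(n−d−1) − w(σ). If σ does not begin with the entry 1, then Δ(σ) ≥ n−d−1. -/

import Mathlib

/-- Number of descents of a sequence. -/
def desL : List ℕ → ℕ
  | a :: b :: t => (if b < a then 1 else 0) + desL (b :: t)
  | _ => 0

/-- Repeatedly split a sequence just after its maximum element. -/
def splitLeftAux : ℕ → List ℕ → List (List ℕ)
  | 0, _ => []
  | _, [] => []
  | fuel + 1, l =>
    let i := l.idxOf (l.foldr Nat.max 0)
    l.take (i + 1) :: splitLeftAux fuel (l.drop (i + 1))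

def splitLeft (l : List ℕ) : List (List ℕ) := splitLeftAux l.length l

/-- Split a sequence at its minimum element, splitting the left part
repeatedly just after its maximum. -/
def splitAll (l : List ℕ) : List (List ℕ) :=
  let m := l.foldr Nat.min (l.headD 0)
  let i := l.idxOf m
  splitLeft (l.take i) ++ [[m]] ++ [l.drop (i + 1)]

/-- The weight of a sequence of distinct naturals (fuelled version; the fuel
`(length+2)^2` in `weightL` is more than the recursion depth ever needed). -/
def weightAux : ℕ → List ℕ → ℕ
  | 0, _ => 0
  | fuel + 1, l =>
    if l.length ≤ 1 ∨ l.Pairwise (· < ·) then 0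
    else ((splitAll (l ++ [l.foldr Nat.max 0 + 1])).map
      (fun p => desL p + weightAux fuel p)).sum

/-- The weight of a permutation viewed as a sequence. -/
def weightL (l : List ℕ) : ℕ := weightAux ((l.length + 2) ^ 2) l

/-- `l` is a permutation of `[n] = {1,…,n}` written as a sequence. -/
def IsPermList (n : ℕ) (l : List ℕ) : Prop := l.Perm (List.range' 1 n)

/-!
Write `σ = v · 1 · q`. Appending `n+1` and splitting gives the pieces of `v`, the singleton `1`
and `q · (n+1)`. By induction along the recursion, a sequence `u` followed by an increasing run of
larger entries has weight at most `d(u)(|u| - d(u) - 1)`; appending a larger entry or prepending a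
smaller one raises this bound by exactly `d(u)`, which pays for the descent term of each piece.
Gluing the bounds for `v` and `1 · q` across the descent in front of `1` yields `d(n-d-1)` with
a surplus of one for every ascent, i.e. `n - d - 1`, whenever `v` is nonempty.
-/

open List

section Descents

lemma desL_add_one_le_length : ∀ {l : List ℕ}, l ≠ [] → desL l + 1 ≤ l.length
  | [_], _ => le_rfl
  | a :: b :: t, _ => by
    have := desL_add_one_le_length (l := b :: t) (cons_ne_nil b t)
    simp only [desL, length_cons] at this ⊢
    split <;> omega

lemma desL_append_cons : ∀ {x : List ℕ} (hx : x ≠ []) (b : ℕ) (t : List ℕ),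
    desL (x ++ b :: t) = desL x + (if b < x.getLast hx then 1 else 0) + desL (b :: t)
  | [a], _, b, t => by
    change _ = 0 + _ + _
    rw [Nat.zero_add]
    rfl
  | a :: c :: x, _, b, t => by
    have ih := desL_append_cons (cons_ne_nil c x) b t
    change _ + desL ((c :: x) ++ b :: t) = _
    rw [ih, getLast_cons_cons]
    change _ = (_ + desL (c :: x)) + _ + _
    ring

lemma desL_eq_zero_of_isChain : ∀ {s : List ℕ}, s.IsChain (· < ·) → desL s = 0
  | [], _ => rfl
  | [_], _ => rfl
  | a :: b :: t, h => by
    rw [isChain_cons_cons] at h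
    simp [desL, h.1.not_gt, desL_eq_zero_of_isChain h.2]

lemma desL_append_of_isChain {q s : List ℕ} (hs : s.IsChain (· < ·))
    (hqs : ∀ a ∈ q, ∀ b ∈ s, a < b) : desL (q ++ s) = desL q := by
  rcases s with _ | ⟨b, t⟩
  · rw [append_nil]
  rcases eq_or_ne q [] with rfl | hq
  · rw [nil_append]; exact desL_eq_zero_of_isChain hs
  rw [desL_append_cons hq, desL_eq_zero_of_isChain hs,
    if_neg (hqs _ (getLast_mem hq) b mem_cons_self).not_gt]
  rfl

lemma desL_cons_of_forall_le {m : ℕ} {q : List ℕ} (hq : ∀ b ∈ q, m ≤ b) :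
    desL (m :: q) = desL q := by
  rcases q with _ | ⟨b, t⟩
  · rfl
  · simp [desL, (hq b mem_cons_self).not_gt]

end Descents

section MaxWeight

def maxWeight (l : List ℕ) : ℕ := desL l * (l.length - desL l - 1)

lemma desL_add_maxWeight (l : List ℕ) : desL l + maxWeight l = desL l * (l.length - desL l) := by
  rcases Nat.eq_zero_or_pos (desL l) with h0 | hpos
  · simp [maxWeight, h0]
  have hl : l ≠ [] := by rintro rfl; exact hpos.ne' rfl
  obtain ⟨k, hk⟩ : ∃ k, l.length - desL l = k + 1 :=
    ⟨_, (Nat.succ_pred_eq_of_pos (by have := desL_add_one_le_length hl; omega)).symm⟩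
  rw [maxWeight, hk, Nat.add_sub_cancel, Nat.mul_succ, add_comm]

lemma maxWeight_append_singleton {w : List ℕ} {c : ℕ} (hw : ∀ x ∈ w, x < c) :
    maxWeight (w ++ [c]) = desL w + maxWeight w := by
  have hdes : desL (w ++ [c]) = desL w :=
    desL_append_of_isChain (isChain_singleton c) (by simpa using hw)
  rw [desL_add_maxWeight, maxWeight, hdes, length_append, length_singleton]
  congr 1
  omega

lemma maxWeight_cons_of_forall_le {m : ℕ} {q : List ℕ} (hq : ∀ x ∈ q, m ≤ x) :
    maxWeight (m :: q) = desL q + maxWeight q := by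
  rw [desL_add_maxWeight, maxWeight, desL_cons_of_forall_le hq, length_cons]
  congr 1
  omega

/-- At a descent the descent counts add up plus one and the ascent counts add up, and
`(d₁ + 1 + d₂)(a₁ + a₂) = d₁a₁ + d₂a₂ + (a₁ + a₂) + d₁a₂ + d₂a₁`. -/
lemma maxWeight_add_maxWeight_add_le {x : List ℕ} (hx : x ≠ []) {b : ℕ} (t : List ℕ)
    (hb : b < x.getLast hx) :
    maxWeight x + maxWeight (b :: t) + ((x ++ b :: t).length - desL (x ++ b :: t) - 1) ≤
      maxWeight (x ++ b :: t) := by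
  have hdes : desL (x ++ b :: t) = desL x + 1 + desL (b :: t) := by
    rw [desL_append_cons hx, if_pos hb]
  have hasc : (x ++ b :: t).length - desL (x ++ b :: t) - 1 =
      (x.length - desL x - 1) + ((b :: t).length - desL (b :: t) - 1) := by
    have := desL_add_one_le_length hx
    have := desL_add_one_le_length (cons_ne_nil b t)
    rw [length_append, hdes]
    omega
  rw [maxWeight, maxWeight, maxWeight, hasc, hdes]
  nlinarith

end MaxWeight

section Folds

lemma foldr_max_eq {l : List ℕ} {M : ℕ} (hM : M ∈ l) (h : ∀ x ∈ l, x ≤ M) :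
    l.foldr Nat.max 0 = M :=
  le_antisymm (max_le_of_forall_le l M h) (le_max_of_le hM le_rfl)

lemma lt_foldr_max_add_one {l : List ℕ} {x : ℕ} (hx : x ∈ l) : x < l.foldr Nat.max 0 + 1 :=
  Nat.lt_succ_of_le (le_max_of_le hx le_rfl)

lemma le_foldr_min {l : List ℕ} {m c : ℕ} (h : ∀ x ∈ l, m ≤ x) (hc : m ≤ c) :
    m ≤ l.foldr Nat.min c := by
  induction l with
  | nil => exact hc
  | cons a t ih =>
    simp only [mem_cons, forall_eq_or_imp] at h
    exact le_min h.1 (ih h.2)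

lemma foldr_min_eq {l : List ℕ} {m c : ℕ} (hm : m ∈ l) (h : ∀ x ∈ l, m ≤ x) (hc : m ≤ c) :
    l.foldr Nat.min c = m :=
  le_antisymm (min_le_of_le' c hm le_rfl) (le_foldr_min h hc)

lemma exists_mem_forall_le {l : List ℕ} (hl : l ≠ []) : ∃ m ∈ l, ∀ x ∈ l, m ≤ x := by
  simpa using l.toFinset.exists_min_image id (by simpa using hl)

lemma exists_mem_forall_ge {l : List ℕ} (hl : l ≠ []) : ∃ M ∈ l, ∀ x ∈ l, x ≤ M := by
  simpa using l.toFinset.exists_max_image id (by simpa using hl)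

end Folds

section Splitting

lemma splitLeftAux_nil (f : ℕ) : splitLeftAux f [] = [] := by cases f <;> rfl

lemma splitLeftAux_congr : ∀ {f g : ℕ} {l : List ℕ}, l.length ≤ f → l.length ≤ g →
    splitLeftAux f l = splitLeftAux g l
  | _, _, [], _, _ => by rw [splitLeftAux_nil, splitLeftAux_nil]
  | f + 1, g + 1, x :: xs, hf, hg => by
    change _ :: _ = _ :: _
    congr 1
    exact splitLeftAux_congr (by simp only [length_drop, length_cons] at hf ⊢; omega)
      (by simp only [length_drop, length_cons] at hg ⊢; omega)
  | 0, _, _ :: _, hf, _ => by simp at hf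
  | _, 0, _ :: _, _, hg => by simp at hg

lemma notMem_of_nodup_append_cons {α : Type*} {v r : List α} {a : α} (h : (v ++ a :: r).Nodup) :
    a ∉ v :=
  fun ha => (nodup_cons.1 (nodup_middle.1 h)).1 (mem_append_left r ha)

lemma splitLeft_append_cons_of_max {w r : List ℕ} {M : ℕ} (hMw : M ∉ w)
    (hM : ∀ x ∈ w ++ M :: r, x ≤ M) : splitLeft (w ++ M :: r) = (w ++ [M]) :: splitLeft r := by
  have hmax : (w ++ M :: r).foldr Nat.max 0 = M := foldr_max_eq (by simp) hM
  have hidx : (w ++ M :: r).idxOf M = w.length := by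
    rw [idxOf_append_of_notMem hMw, idxOf_cons_self, add_zero]
  rw [splitLeft, length_append, length_cons, ← add_assoc, splitLeftAux]
  · simp only [hmax, hidx]
    rw [append_cons w M r, take_left' (by simp), drop_left' (by simp),
      splitLeftAux_congr (by omega) le_rfl]
    rfl
  · simp

lemma splitAll_append_cons_of_min {v r : List ℕ} {m : ℕ} (hmv : m ∉ v)
    (hm : ∀ x ∈ v ++ m :: r, m ≤ x) : splitAll (v ++ m :: r) = splitLeft v ++ [[m]] ++ [r] := by
  have hhead : (v ++ m :: r).headD 0 ∈ v ++ m :: r := by cases v <;> simp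
  have hmin : (v ++ m :: r).foldr Nat.min ((v ++ m :: r).headD 0) = m :=
    foldr_min_eq (by simp) hm (hm _ hhead)
  have hidx : (v ++ m :: r).idxOf m = v.length := by
    rw [idxOf_append_of_notMem hmv, idxOf_cons_self, add_zero]
  rw [splitAll]
  simp only [hmin, hidx, take_left']
  rw [append_cons v m r, drop_left' (by simp)]

end Splitting

section Weight

def splitWeight (fuel : ℕ) (ps : List (List ℕ)) : ℕ := (ps.map fun p => desL p + weightAux fuel p).sum

lemma splitWeight_append (fuel : ℕ) (ps qs : List (List ℕ)) :
    splitWeight fuel (ps ++ qs) = splitWeight fuel ps + splitWeight fuel qs := by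
  simp [splitWeight]

lemma splitWeight_cons (fuel : ℕ) (p : List ℕ) (ps : List (List ℕ)) :
    splitWeight fuel (p :: ps) = desL p + weightAux fuel p + splitWeight fuel ps := by
  simp [splitWeight]

lemma weightAux_of_length_le_one (fuel : ℕ) {l : List ℕ} (hl : l.length ≤ 1) :
    weightAux fuel l = 0 := by
  cases fuel with
  | zero => rfl
  | succ fuel => rw [weightAux, if_pos (Or.inl hl)]

/-- The tail `s` absorbs the entries `n + 1, n + 2, …` appended at the successive levels of the
recursion; they never create descents. -/
def WeightBound (fuel : ℕ) : Prop :=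
  ∀ u s : List ℕ, (u ++ s).Nodup → s.IsChain (· < ·) → (∀ a ∈ u, ∀ b ∈ s, a < b) →
    weightAux fuel (u ++ s) ≤ maxWeight u

variable {fuel : ℕ}

lemma splitWeight_splitLeft_le (h : WeightBound fuel) (v : List ℕ) (hv : v.Nodup) :
    splitWeight fuel (splitLeft v) ≤ maxWeight v := by
  rcases eq_or_ne v [] with rfl | hne
  · exact Nat.zero_le _
  obtain ⟨M, hMv, hM⟩ := exists_mem_forall_ge hne
  obtain ⟨w, r, rfl⟩ := append_of_mem hMv
  have hMwr : M ∉ w ++ r := (nodup_cons.1 (nodup_middle.1 hv)).1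
  have hwM : ∀ x ∈ w, x < M := fun x hx =>
    (hM x (mem_append_left _ hx)).lt_of_ne (by rintro rfl; exact hMwr (mem_append_left r hx))
  have hsplit : w ++ M :: r = (w ++ [M]) ++ r := append_cons w M r
  have hpiece : desL (w ++ [M]) + weightAux fuel (w ++ [M]) ≤ maxWeight (w ++ [M]) := by
    have hwM' : ∀ a ∈ w, ∀ b ∈ [M], a < b := by simpa using hwM
    rw [desL_append_of_isChain (isChain_singleton M) hwM', maxWeight_append_singleton hwM]
    refine Nat.add_le_add_left (h w [M] ?_ (isChain_singleton M) hwM') _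
    exact hv.sublist (hsplit ▸ sublist_append_left _ _)
  rw [splitLeft_append_cons_of_max (fun hw => hMwr (mem_append_left r hw)) hM, splitWeight_cons]
  rcases eq_or_ne r [] with rfl | hr
  · simpa [splitWeight, splitLeft, splitLeftAux] using hpiece
  obtain ⟨b, t, rfl⟩ := exists_cons_of_ne_nil hr
  have hbM : b < M := (hM b (by simp)).lt_of_ne (by rintro rfl; exact hMwr (by simp))
  have hrest := splitWeight_splitLeft_le h (b :: t) (hv.sublist (hsplit ▸ sublist_append_right _ _))
  have hjoin := maxWeight_add_maxWeight_add_le (x := w ++ [M]) (by simp) t (by simpa using hbM)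
  rw [hsplit]
  omega
termination_by v.length
decreasing_by subst_vars; simp only [length_append, length_cons]; omega

lemma weightAux_succ_le (h : WeightBound fuel) {v q s : List ℕ} {m : ℕ}
    (hnd : (v ++ m :: q ++ s).Nodup) (hs : s.IsChain (· < ·))
    (hm : ∀ x ∈ v ++ m :: q, m ≤ x) (hqs : ∀ a ∈ v ++ m :: q, ∀ b ∈ s, a < b) :
    weightAux (fuel + 1) (v ++ m :: q ++ s) ≤
      splitWeight fuel (splitLeft v) + maxWeight (m :: q) := by
  rw [weightAux]
  split_ifs
  · exact Nat.zero_le _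
  change splitWeight fuel _ ≤ _
  set top := (v ++ m :: q ++ s).foldr Nat.max 0 + 1
  have htop : ∀ x ∈ v ++ m :: q ++ s, x < top := fun x hx => lt_foldr_max_add_one hx
  have hl : v ++ m :: q ++ s ++ [top] = v ++ m :: (q ++ (s ++ [top])) := by simp
  have hnd' : (v ++ m :: (q ++ (s ++ [top]))).Nodup := by
    rw [← hl]
    exact nodup_append.2 ⟨hnd, nodup_singleton top, by simpa using fun x hx => (htop x hx).ne⟩
  have hm' : ∀ x ∈ v ++ m :: (q ++ (s ++ [top])), m ≤ x := by
    have hmem : m ∈ v ++ m :: q := by simp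
    rw [← hl]
    intro x hx
    rcases mem_append.1 hx with hx | hx
    · rcases mem_append.1 hx with hx | hx
      · exact hm x hx
      · exact (hqs m hmem x hx).le
    · rw [mem_singleton.1 hx]
      exact (htop m (mem_append_left s hmem)).le
  have hchain : (s ++ [top]).IsChain (· < ·) := by
    refine (pairwise_append.2 ⟨isChain_iff_pairwise.1 hs, pairwise_singleton _ _, ?_⟩).isChain
    simpa using fun x hx => htop x (mem_append_right _ hx)
  have hqtop : ∀ a ∈ q, ∀ b ∈ s ++ [top], a < b := by
    intro a ha b hb
    have ha' : a ∈ v ++ m :: q := by simp [ha]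
    rcases mem_append.1 hb with hb | hb
    · exact hqs a ha' b hb
    · rw [mem_singleton.1 hb]
      exact htop a (mem_append_left s ha')
  have hweight := h q (s ++ [top]) (hnd'.of_append_right.of_cons) hchain hqtop
  rw [hl, splitAll_append_cons_of_min (notMem_of_nodup_append_cons hnd') hm', splitWeight_append,
    splitWeight_append, splitWeight_cons, splitWeight_cons, desL_append_of_isChain hchain hqtop,
    maxWeight_cons_of_forall_le (fun x hx => hm x (by simp [hx]))]
  have hsingleton : desL [m] + weightAux fuel [m] = 0 := by
    rw [weightAux_of_length_le_one fuel le_rfl]; rfl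
  have hnil : splitWeight fuel [] = 0 := rfl
  omega

lemma weightAux_succ_add_le (h : WeightBound fuel) {v q s : List ℕ} {m : ℕ} (hv : v ≠ [])
    (hnd : (v ++ m :: q ++ s).Nodup) (hs : s.IsChain (· < ·))
    (hm : ∀ x ∈ v ++ m :: q, m ≤ x) (hqs : ∀ a ∈ v ++ m :: q, ∀ b ∈ s, a < b) :
    weightAux (fuel + 1) (v ++ m :: q ++ s) +
        ((v ++ m :: q).length - desL (v ++ m :: q) - 1) ≤ maxWeight (v ++ m :: q) := by
  have hndu := hnd.sublist (sublist_append_left _ s)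
  have hmv := notMem_of_nodup_append_cons hndu
  have hlast : m < v.getLast hv :=
    (hm _ (mem_append_left _ (getLast_mem hv))).lt_of_ne fun he => hmv (he ▸ getLast_mem hv)
  have hsplit := weightAux_succ_le h hnd hs hm hqs
  have hleft := splitWeight_splitLeft_le h v (hndu.sublist (sublist_append_left _ _))
  have hjoin := maxWeight_add_maxWeight_add_le hv q hlast
  omega

lemma weightBound_succ (h : WeightBound fuel) : WeightBound (fuel + 1) := by
  intro u s hnd hs hus
  rcases eq_or_ne u [] with rfl | hu
  · rw [nil_append, weightAux, if_pos (Or.inr (isChain_iff_pairwise.1 hs))]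
    exact Nat.zero_le _
  obtain ⟨m, hmu, hm⟩ := exists_mem_forall_le hu
  obtain ⟨v, q, rfl⟩ := append_of_mem hmu
  rcases eq_or_ne v [] with rfl | hv
  · simpa [splitWeight, splitLeft, splitLeftAux] using weightAux_succ_le h hnd hs hm hus
  · exact (Nat.le_add_right _ _).trans (weightAux_succ_add_le h hv hnd hs hm hus)

theorem weightBound : ∀ fuel, WeightBound fuel
  | 0 => fun _ _ _ _ _ => Nat.zero_le _
  | fuel + 1 => weightBound_succ (weightBound fuel)

end Weight

/-- If a permutation of `[n]` with `d` descents does not begin with `1`, its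
weight disparity `d(n-d-1) - w(σ)` is at least `n-d-1`. -/
theorem disparity_bound (n d : ℕ) (l : List ℕ) (hperm : IsPermList n l)
    (hd : desL l = d) (h1 : l.head? ≠ some 1) :
    n - d - 1 ≤ d * (n - d - 1) - weightL l := by
  rcases Nat.eq_zero_or_pos n with rfl | hn
  · simp
  have hlen : l.length = n := by simpa using hperm.length_eq
  have hmin : ∀ x ∈ l, 1 ≤ x := fun x hx => (mem_range'_1.1 (hperm.mem_iff.1 hx)).1
  obtain ⟨v, q, rfl⟩ := append_of_mem (hperm.mem_iff.2 (mem_range'_1.2 ⟨le_rfl, by omega⟩))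
  have hv : v ≠ [] := by rintro rfl; exact h1 rfl
  obtain ⟨fuel, hfuel⟩ : ∃ fuel, (n + 2) ^ 2 = fuel + 1 :=
    ⟨_, (Nat.succ_pred_eq_of_pos (by positivity)).symm⟩
  have hbound := weightAux_succ_add_le (weightBound fuel) hv (s := [])
    (by simpa using hperm.nodup_iff.2 (nodup_range' ..)) isChain_nil hmin (by simp)
  rw [append_nil, maxWeight, hlen, hd] at hbound
  rw [weightL, hlen, hfuel]
  omega
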